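/- Let C₁, C₂ be codes on disjoint-intersection setup admitting an r-sum (r ≥ 1), with C = C₁ ⊕_r C₂ on index set I = I₁ Δ I₂, J = I₁∖I₂, J̄ = I₂∖I₁. Then C|_J = C₁|_J, and the projection map C₁ → C₁|_J is an isomorphism; consequently dim(C|_J) = dim(C₁). -/
import Mathlib


open Module

/-- The submodule of functions in `α → F` vanishing on `s`. -/
def vanishOn (F : Type*) [Field F] {α : Type*} (s : Set α) : Submodule F (α → F) where
  carrier := {x | ∀ a ∈ s, x a = 0}
  add_mem' := by
    intro x y hx hy a ha
    show x a + y a = 0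
    rw [hx a ha, hy a ha, add_zero]
  zero_mem' := fun a _ => rfl
  smul_mem' := by
    intro c x hx a ha
    show c • x a = 0
    rw [hx a ha, smul_zero]

variable (F : Type*) [Field F] (J K Jb : Type*)

/-- The `⋆` operation: indices of the first code are `J ⊕ K`, of the second `K ⊕ Jb`,
where `K` plays the role of the common index set `I₁ ∩ I₂`.  On `J` the result agrees with
`x`, on `Jb` with `y`, and on the common part `K` it is `x − y`. -/
noncomputable def starMap :
    ((J ⊕ K → F) × (K ⊕ Jb → F)) →ₗ[F] (J ⊕ K ⊕ Jb → F) where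
  toFun p := Sum.elim (fun j => p.1 (Sum.inl j))
    (Sum.elim (fun k => p.1 (Sum.inr k) - p.2 (Sum.inl k)) (fun j => p.2 (Sum.inr j)))
  map_add' p q := by
    funext i
    rcases i with j | k | j <;> simp <;> ring
  map_smul' c p := by
    funext i
    rcases i with j | k | j <;> simp <;> ring

variable {F J K Jb}

/-- The code `C₁ ⋆ C₂ = {x ⋆ y : x ∈ C₁, y ∈ C₂}`. -/
noncomputable def starCode (C₁ : Submodule F (J ⊕ K → F)) (C₂ : Submodule F (K ⊕ Jb → F)) :
    Submodule F (J ⊕ K ⊕ Jb → F) :=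
  (C₁.prod C₂).map (starMap F J K Jb)

/-- The projection `C₁^{(p)} = C₁|_{I₁ ∩ I₂}` of the first code onto the common part `K`. -/
noncomputable def projK₁ (C₁ : Submodule F (J ⊕ K → F)) : Submodule F (K → F) :=
  C₁.map (LinearMap.funLeft F F (Sum.inr : K → J ⊕ K))

/-- The projection `C₂^{(p)} = C₂|_{I₁ ∩ I₂}` of the second code onto the common part `K`. -/
noncomputable def projK₂ (C₂ : Submodule F (K ⊕ Jb → F)) : Submodule F (K → F) :=
  C₂.map (LinearMap.funLeft F F (Sum.inl : K → K ⊕ Jb))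

/-- The cross-section `C₁^{(s)} = (C₁)_{I₁ ∩ I₂}` on the common part `K`. -/
noncomputable def crossK₁ (C₁ : Submodule F (J ⊕ K → F)) : Submodule F (K → F) :=
  (C₁ ⊓ vanishOn F (Set.range (Sum.inl : J → J ⊕ K))).map
    (LinearMap.funLeft F F (Sum.inr : K → J ⊕ K))

/-- The cross-section `C₂^{(s)} = (C₂)_{I₁ ∩ I₂}` on the common part `K`. -/
noncomputable def crossK₂ (C₂ : Submodule F (K ⊕ Jb → F)) : Submodule F (K → F) :=
  (C₂ ⊓ vanishOn F (Set.range (Sum.inr : Jb → K ⊕ Jb))).map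
    (LinearMap.funLeft F F (Sum.inl : K → K ⊕ Jb))

/-- `S(C₁, C₂)`: the cross-section of `C₁ ⋆ C₂` on the symmetric difference
`I₁ Δ I₂ = J ⊕ Jb`. -/
noncomputable def sCode (C₁ : Submodule F (J ⊕ K → F)) (C₂ : Submodule F (K ⊕ Jb → F)) :
    Submodule F (J ⊕ Jb → F) :=
  (starCode C₁ C₂ ⊓ vanishOn F (Set.range (fun k : K => (Sum.inr (Sum.inl k) : J ⊕ K ⊕ Jb)))).map
    (LinearMap.funLeft F F (Sum.elim Sum.inl (Sum.inr ∘ Sum.inr) : J ⊕ Jb → J ⊕ K ⊕ Jb))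

/-- in an `r`-sum `C = C₁ ⊕_r C₂` with `J = I₁ ∖ I₂`, the projection of `C`
onto `J` equals the projection of `C₁` onto `J`, the projection map `C₁ → C₁|_J` is
injective (hence an isomorphism onto its image), and consequently `dim C|_J = dim C₁`. -/
theorem rSum_proj_left [Fintype J] [Fintype K] [Fintype Jb] [Fintype F]
    (r : ℕ) (hr : 1 ≤ r)
    (hK : Fintype.card K = (Fintype.card F ^ r - 1) / (Fintype.card F - 1))
    (D : Fin r → K → F)
    (hDrows : LinearIndependent F D)
    (hDcols : ∀ k₁ k₂ : K, k₁ ≠ k₂ →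
      LinearIndependent F ![fun i => D i k₁, fun i => D i k₂])
    (C₁ : Submodule F (J ⊕ K → F)) (C₂ : Submodule F (K ⊕ Jb → F))
    (hp₁ : projK₁ C₁ = Submodule.span F (Set.range D))
    (hp₂ : projK₂ C₂ = Submodule.span F (Set.range D))
    (hs₁ : crossK₁ C₁ = ⊥) (hs₂ : crossK₂ C₂ = ⊥) :
    (sCode C₁ C₂).map (LinearMap.funLeft F F (Sum.inl : J → J ⊕ Jb)) =
        C₁.map (LinearMap.funLeft F F (Sum.inl : J → J ⊕ K)) ∧
      Function.Injective
        (fun x : ↥C₁ => LinearMap.funLeft F F (Sum.inl : J → J ⊕ K) x.val) ∧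
      finrank F ↥((sCode C₁ C₂).map (LinearMap.funLeft F F (Sum.inl : J → J ⊕ Jb))) =
        finrank F ↥C₁ := by
    -- injectivity of the projection C₁ → C₁|_J
  have hker : ∀ z : J ⊕ K → F, z ∈ C₁ → (∀ j : J, z (Sum.inl j) = 0) → z = 0 := by
    intro z hz hzJ
    have hmem : (fun k => z (Sum.inr k)) ∈ crossK₁ C₁ := by
      refine ⟨z, ⟨hz, ?_⟩, rfl⟩
      rintro a ⟨j, rfl⟩
      exact hzJ j
    rw [hs₁, Submodule.mem_bot] at hmem
    funext i
    rcases i with j | k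
    · exact hzJ j
    · exact congrFun hmem k
  have hinj : Function.Injective
      (fun x : ↥C₁ => LinearMap.funLeft F F (Sum.inl : J → J ⊕ K) x.val) := by
    intro x y hxy
    have hz : (x.val - y.val) = 0 := by
      refine hker _ (sub_mem x.2 y.2) fun j => ?_
      have := congrFun hxy j
      simpa [LinearMap.funLeft, sub_eq_zero] using this
    ext1
    exact sub_eq_zero.mp hz
  -- equality of the two projections onto J
  have heq : (sCode C₁ C₂).map (LinearMap.funLeft F F (Sum.inl : J → J ⊕ Jb)) =
      C₁.map (LinearMap.funLeft F F (Sum.inl : J → J ⊕ K)) := by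
    apply le_antisymm
    · rintro u ⟨w, hw, rfl⟩
      obtain ⟨v, hv, rfl⟩ := hw
      obtain ⟨⟨x, y⟩, hxy, rfl⟩ := hv.1
      exact ⟨x, hxy.1, rfl⟩
    · rintro u ⟨x, hx, rfl⟩
      have hxK : (fun k => x (Sum.inr k)) ∈ projK₂ C₂ := by
        rw [hp₂, ← hp₁]
        exact ⟨x, hx, rfl⟩
      obtain ⟨y, hy, hyK⟩ := hxK
      refine ⟨LinearMap.funLeft F F (Sum.elim Sum.inl (Sum.inr ∘ Sum.inr) : J ⊕ Jb → J ⊕ K ⊕ Jb)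
        (starMap F J K Jb (x, y)), ⟨_, Submodule.mem_inf.mpr ⟨⟨⟨x, y⟩, ⟨hx, hy⟩, rfl⟩, ?_⟩, rfl⟩, ?_⟩
      · rintro a ⟨k, rfl⟩
        have := congrFun hyK k
        simp [starMap, LinearMap.funLeft] at this ⊢
        rw [this]
        ring
      · funext j
        rfl
  refine ⟨heq, hinj, ?_⟩
  rw [heq]
  have : C₁.map (LinearMap.funLeft F F (Sum.inl : J → J ⊕ K)) =
      LinearMap.range ((LinearMap.funLeft F F (Sum.inl : J → J ⊕ K)).domRestrict C₁) := by
    rw [LinearMap.range_domRestrict]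
  rw [this]
  exact LinearMap.finrank_range_of_inj hinj
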